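/- Let (Ω, P) be a probability space, L : Ω → ℕ a random length, g⋆(l) and g_b(l) vectors in a real inner product space, and q(l) ∈ [0,1] with q̄ = E[q(L)] > 0. Set g⋆ = E[g⋆(L)] ≠ 0, g_b = E[q(L)·g_b(L)], κ = E[‖g⋆(L)‖]/‖g⋆‖, LRE = (1/2)·E[|q(L)/q̄ − 1|], and ρ = κ·(η + 2γ(1+η)·LRE). Under the bounded-stratification assumption (‖g_b(l) − g⋆(l)‖ ≤ η·‖g⋆(l)‖ for all l, η ∈ [0,1)) and the bounded-correlation assumption (E[|q(L) − q̄|·‖g⋆(L)‖] ≤ γ·E[|q(L) − q̄|]·E[‖g⋆(L)‖]), if ρ < 1 then ‖g_b‖ ≥ (1 − ρ)·q̄·‖g⋆‖ > 0; in particular the clipped surrogate update g_b does not vanish. -/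

import Mathlib

/-!
Write `w = q(L)`, `s = g⋆(L)`, `b = g_b(L)`. Pointwise,
`w • b - q̄ • s = w • (b - s) + (w - q̄) • s`, and since `0 ≤ w ≤ |w - q̄| + q̄` the bounded
stratification gives `‖w • b - q̄ • s‖ ≤ ((1 + η) |w - q̄| + η q̄) ‖s‖`. Integrating and using the
bounded correlation, `E[|w - q̄|] = 2 q̄ LRE` and `E‖s‖ = κ ‖g⋆‖` yields
`‖g_b - q̄ • g⋆‖ ≤ ρ q̄ ‖g⋆‖`; the reverse triangle inequality then bounds `‖g_b‖` from below.
-/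

open MeasureTheory

theorem norm_smul_sub_smul_le_of_norm_sub_le {E : Type*} [SeminormedAddCommGroup E]
    [NormedSpace ℝ E] {w c η : ℝ} {b s : E} (hw : 0 ≤ w) (hη : 0 ≤ η)
    (h : ‖b - s‖ ≤ η * ‖s‖) :
    ‖w • b - c • s‖ ≤ ((1 + η) * |w - c| + η * c) * ‖s‖ := by
  have hw_le : w ≤ |w - c| + c := by linarith [le_abs_self (w - c)]
  have hweighted : w * ‖b - s‖ ≤ η * (|w - c| + c) * ‖s‖ := by
    calc w * ‖b - s‖ ≤ w * (η * ‖s‖) := mul_le_mul_of_nonneg_left h hw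
      _ = η * w * ‖s‖ := by ring
      _ ≤ η * (|w - c| + c) * ‖s‖ := by gcongr
  calc ‖w • b - c • s‖ = ‖w • (b - s) + (w - c) • s‖ := by congr 1; module
    _ ≤ w * ‖b - s‖ + |w - c| * ‖s‖ := by
        refine (norm_add_le _ _).trans_eq ?_
        rw [norm_smul, norm_smul, Real.norm_of_nonneg hw, Real.norm_eq_abs]
    _ ≤ ((1 + η) * |w - c| + η * c) * ‖s‖ := by linarith

section Integral

variable {α : Type*} [MeasurableSpace α] {μ : Measure α}

theorem integral_abs_div_sub_one (f : α → ℝ) {c : ℝ} (hc : 0 < c) :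
    ∫ x, |f x / c - 1| ∂μ = (∫ x, |f x - c| ∂μ) / c := by
  have hpt : ∀ x, |f x / c - 1| = |f x - c| / c := fun x => by
    rw [div_sub_one hc.ne', abs_div, abs_of_pos hc]
  simp only [hpt, integral_div]

variable {E : Type*} [NormedAddCommGroup E]

theorem MeasureTheory.Integrable.abs_sub_const_mul_norm {w : α → ℝ} {s : α → E} (c : ℝ)
    (hw : AEStronglyMeasurable w μ) (hw01 : ∀ x, w x ∈ Set.Icc (0 : ℝ) 1) (hs : Integrable s μ) :
    Integrable (fun x => |w x - c| * ‖s x‖) μ := by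
  refine hs.norm.bdd_mul (c := 1 + |c|) (hw.sub aestronglyMeasurable_const).norm
    (ae_of_all _ fun x => ?_)
  have := hw01 x
  rw [Real.norm_eq_abs, abs_abs]
  exact (abs_sub _ _).trans (by rw [abs_of_nonneg this.1]; linarith [this.2])

theorem norm_integral_smul_sub_smul_integral_le [NormedSpace ℝ E] {w : α → ℝ} {b s : α → E}
    {c η : ℝ}
    (hwb : Integrable (fun x => w x • b x) μ) (hs : Integrable s μ)
    (hws : Integrable (fun x => |w x - c| * ‖s x‖) μ) (hw : ∀ x, 0 ≤ w x) (hη : 0 ≤ η)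
    (h : ∀ x, ‖b x - s x‖ ≤ η * ‖s x‖) :
    ‖(∫ x, w x • b x ∂μ) - c • ∫ x, s x ∂μ‖
      ≤ (1 + η) * (∫ x, |w x - c| * ‖s x‖ ∂μ) + η * c * ∫ x, ‖s x‖ ∂μ := by
  have hbound : Integrable (fun x => (1 + η) * (|w x - c| * ‖s x‖) + η * c * ‖s x‖) μ :=
    (hws.const_mul _).add (hs.norm.const_mul _)
  rw [← integral_smul, ← integral_sub (g := fun x => c • s x) hwb (hs.smul c),
    ← integral_const_mul, ← integral_const_mul,
    ← integral_add (hws.const_mul _) (hs.norm.const_mul _)]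
  refine norm_integral_le_of_norm_le hbound (ae_of_all _ fun x => ?_)
  have := norm_smul_sub_smul_le_of_norm_sub_le (c := c) (hw x) hη (h x)
  linarith

end Integral

theorem one_sub_mul_norm_le_norm_of_norm_sub_le {E : Type*} [SeminormedAddCommGroup E]
    {x y : E} {ρ : ℝ} (h : ‖x - y‖ ≤ ρ * ‖y‖) : (1 - ρ) * ‖y‖ ≤ ‖x‖ := by
  have := norm_sub_norm_le y x
  rw [norm_sub_rev] at this
  linarith

theorem fspo_clipped_update_nonvanishing_general
    {Ω : Type*} [MeasurableSpace Ω] (P : Measure Ω)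
    {E : Type*} [NormedAddCommGroup E] [InnerProductSpace ℝ E]
    (L : Ω → ℕ) (gstar gb : ℕ → E) (q : ℕ → ℝ)
    (hq : ∀ l, q l ∈ Set.Icc (0 : ℝ) 1)
    (hint_q : Integrable (fun ω => q (L ω)) P)
    (hint_gstar : Integrable (fun ω => gstar (L ω)) P)
    (hint_gb : Integrable (fun ω => q (L ω) • gb (L ω)) P)
    (qbar : ℝ) (hqbar_pos : 0 < qbar)
    (gS : E) (hgS_def : gS = ∫ ω, gstar (L ω) ∂P) (hgS_ne : gS ≠ 0)
    (gB : E) (hgB_def : gB = ∫ ω, q (L ω) • gb (L ω) ∂P)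
    (κ : ℝ) (hκ_def : κ = (∫ ω, ‖gstar (L ω)‖ ∂P) / ‖gS‖)
    (LRE : ℝ) (hLRE_def : LRE = (1 / 2) * ∫ ω, |q (L ω) / qbar - 1| ∂P)
    (η : ℝ) (hη0 : 0 ≤ η)
    (hstrat : ∀ l, ‖gb l - gstar l‖ ≤ η * ‖gstar l‖)
    (γ : ℝ)
    (hcorr : ∫ ω, |q (L ω) - qbar| * ‖gstar (L ω)‖ ∂P
        ≤ γ * (∫ ω, |q (L ω) - qbar| ∂P) * ∫ ω, ‖gstar (L ω)‖ ∂P)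
    (ρ : ℝ) (hρ_def : ρ = κ * (η + 2 * γ * (1 + η) * LRE))
    (hρ_lt : ρ < 1) :
    (1 - ρ) * qbar * ‖gS‖ ≤ ‖gB‖ ∧ 0 < (1 - ρ) * qbar * ‖gS‖ ∧ gB ≠ 0 := by
  have hgS_pos : 0 < ‖gS‖ := norm_pos_iff.mpr hgS_ne
  have hmass : ∫ ω, ‖gstar (L ω)‖ ∂P = κ * ‖gS‖ := by
    rw [hκ_def, div_mul_cancel₀ _ hgS_pos.ne']
  have hdev : ∫ ω, |q (L ω) - qbar| ∂P = 2 * qbar * LRE := by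
    rw [hLRE_def, integral_abs_div_sub_one _ hqbar_pos]
    field_simp
  have hpert := norm_integral_smul_sub_smul_integral_le (c := qbar) hint_gb hint_gstar
    (hint_gstar.abs_sub_const_mul_norm qbar hint_q.1 fun ω => hq (L ω))
    (fun ω => (hq (L ω)).1) hη0 fun ω => hstrat (L ω)
  rw [← hgB_def, ← hgS_def, hmass] at hpert
  rw [hdev, hmass] at hcorr
  have hclose : ‖gB - qbar • gS‖ ≤ ρ * ‖qbar • gS‖ := by
    rw [norm_smul, Real.norm_of_nonneg hqbar_pos.le, hρ_def]
    calc ‖gB - qbar • gS‖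
        ≤ (1 + η) * (∫ ω, |q (L ω) - qbar| * ‖gstar (L ω)‖ ∂P) + η * qbar * (κ * ‖gS‖) := hpert
      _ ≤ (1 + η) * (γ * (2 * qbar * LRE) * (κ * ‖gS‖)) + η * qbar * (κ * ‖gS‖) := by
          gcongr
      _ = κ * (η + 2 * γ * (1 + η) * LRE) * (qbar * ‖gS‖) := by ring
  have hlow := one_sub_mul_norm_le_norm_of_norm_sub_le hclose
  rw [norm_smul, Real.norm_of_nonneg hqbar_pos.le, ← mul_assoc] at hlow
  have hpos : 0 < (1 - ρ) * qbar * ‖gS‖ := by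
    have : 0 < 1 - ρ := by linarith
    positivity
  exact ⟨hlow, hpos, fun h => by rw [h, norm_zero] at hlow; linarith⟩

/-- **Non-vanishing of the clipped update** (consequence of the norm inequality in the
proof of Theorem 2.1): under bounded stratification and bounded correlation, with
`ρ = κ(η + 2γ(1+η)·LRE)`, if `ρ < 1` then `‖g_b‖ ≥ (1 − ρ)·q̄·‖g⋆‖ > 0`;
in particular the clipped surrogate update `g_b` does not vanish. -/
theorem fspo_clipped_update_nonvanishing
    {Ω : Type*} [MeasurableSpace Ω] (P : Measure Ω) [IsProbabilityMeasure P]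
    {E : Type*} [NormedAddCommGroup E] [InnerProductSpace ℝ E] [CompleteSpace E]
    (L : Ω → ℕ) (gstar gb : ℕ → E) (q : ℕ → ℝ)
    (hq : ∀ l, q l ∈ Set.Icc (0 : ℝ) 1)
    (hint_q : Integrable (fun ω => q (L ω)) P)
    (hint_gstar : Integrable (fun ω => gstar (L ω)) P)
    (hint_gstar_norm : Integrable (fun ω => ‖gstar (L ω)‖) P)
    (hint_gb : Integrable (fun ω => q (L ω) • gb (L ω)) P)
    (qbar : ℝ) (hqbar_def : qbar = ∫ ω, q (L ω) ∂P) (hqbar_pos : 0 < qbar)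
    (gS : E) (hgS_def : gS = ∫ ω, gstar (L ω) ∂P) (hgS_ne : gS ≠ 0)
    (gB : E) (hgB_def : gB = ∫ ω, q (L ω) • gb (L ω) ∂P)
    (κ : ℝ) (hκ_def : κ = (∫ ω, ‖gstar (L ω)‖ ∂P) / ‖gS‖)
    (LRE : ℝ) (hLRE_def : LRE = (1 / 2) * ∫ ω, |q (L ω) / qbar - 1| ∂P)
    (η : ℝ) (hη0 : 0 ≤ η) (hη1 : η < 1)
    (hstrat : ∀ l, ‖gb l - gstar l‖ ≤ η * ‖gstar l‖)
    (γ : ℝ) (hγ : 0 ≤ γ)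
    (hcorr : ∫ ω, |q (L ω) - qbar| * ‖gstar (L ω)‖ ∂P
        ≤ γ * (∫ ω, |q (L ω) - qbar| ∂P) * ∫ ω, ‖gstar (L ω)‖ ∂P)
    (ρ : ℝ) (hρ_def : ρ = κ * (η + 2 * γ * (1 + η) * LRE))
    (hρ_lt : ρ < 1) :
    (1 - ρ) * qbar * ‖gS‖ ≤ ‖gB‖ ∧ 0 < (1 - ρ) * qbar * ‖gS‖ ∧ gB ≠ 0 :=
  fspo_clipped_update_nonvanishing_general P L gstar gb q hq hint_q hint_gstar hint_gb qbar
    hqbar_pos gS hgS_def hgS_ne gB hgB_def κ hκ_def LRE hLRE_def η hη0 hstrat γ hcorr ρ hρ_def hρ_lt
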